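/- Leibniz rule for the q^{-1}-derivative: for two homogeneous polynomials f(x,y;m) of degree r and g(x,y;m) of degree s (with coefficients depending on the parameter m), and for every ν ≥ 0, the ν-th q^{-1}-derivative with respect to y of their q-product satisfies [f(x,y;m) * g(x,y;m)]^{{ν}} = Σ_{l=0}^{ν} [ν choose l]_q q^{l(s-ν+l)} f^{{l}}(x,y;m) * g^{{ν-l}}(x,y;m-l). -/

import Mathlib

noncomputable section

/-- `alphaQ q a u = ∏_{i=0}^{u-1} (q^a - q^i)`, with integer exponent `a`. -/
def alphaQ (q : ℚ) (a : ℤ) (u : ℕ) : ℚ :=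
  ∏ i ∈ Finset.range u, (q ^ a - q ^ (i : ℤ))

/-- The Gaussian binomial `[a choose b]_q = α(a,b)/α(b,b)`. -/
def gaussQ (q : ℚ) (a b : ℕ) : ℚ := alphaQ q a b / alphaQ q b b

/-- `sig l = l(l-1)/2`. -/
def sig (l : ℕ) : ℕ := l * (l - 1) / 2

/-- A homogeneous polynomial in `x, y` of degree `deg`, whose coefficients depend on an
integer parameter `m`: `coeff m i` is the coefficient of `y^i x^(deg - i)` (coefficients
with `i > deg` are regarded as zero). -/
structure QPoly where
  deg : ℕ
  coeff : ℤ → ℕ → ℚ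

/-- The q-product `a * b`: a homogeneous polynomial of degree `r + s` whose coefficient of
`y^u x^(r+s-u)` is `∑_{i=0}^u q^(i·s) aᵢ(m) b_{u-i}(m-i)`, where `s` is the degree of `b`. -/
def qMul (q : ℚ) (a b : QPoly) : QPoly :=
  ⟨a.deg + b.deg, fun m u =>
    ∑ i ∈ Finset.range (u + 1), q ^ (i * b.deg) * a.coeff m i * b.coeff (m - i) (u - i)⟩

/-- The constant polynomial `1`. -/
def qOne : QPoly := ⟨0, fun _ u => if u = 0 then 1 else 0⟩

/-- The `l`-th q-power: `a^[0] = 1` and `a^[l] = a^[l-1] * a`. -/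
def qPow (q : ℚ) (a : QPoly) : ℕ → QPoly
  | 0 => qOne
  | l + 1 => qMul q (qPow q a l) a

/-- Evaluation of a homogeneous polynomial at `(x, y)`, with parameter `m`. -/
def QPoly.eval (a : QPoly) (m : ℤ) (x y : ℚ) : ℚ :=
  ∑ u ∈ Finset.range (a.deg + 1), a.coeff m u * y ^ u * x ^ (a.deg - u)

/-- The homogeneous polynomial `x + (q^m - 1) y` of degree 1. -/
def polyXA (q : ℚ) : QPoly :=
  ⟨1, fun m u => if u = 0 then 1 else if u = 1 then q ^ m - 1 else 0⟩

/-- The homogeneous polynomial `x - y` of degree 1. -/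
def polyXB : QPoly :=
  ⟨1, fun _ u => if u = 0 then 1 else if u = 1 then -1 else 0⟩

/-- The q⁻¹-derivative with respect to `y` of a homogeneous polynomial of degree `s`,
expressed coefficientwise: the term `g_j y^j x^(s-j)` is sent to
`g_j (q⁻¹^j - 1)/(q⁻¹ - 1) · y^(j-1) x^(s-j)`. -/
def qInvDerivP (q : ℚ) (a : QPoly) : QPoly :=
  ⟨a.deg - 1, fun m j => ((q⁻¹) ^ (j + 1) - 1) / (q⁻¹ - 1) * a.coeff m (j + 1)⟩

/-- Substitution `m ↦ m - t` in the integer parameter of a homogeneous polynomial. -/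
def mShift (a : QPoly) (t : ℤ) : QPoly := ⟨a.deg, fun m i => a.coeff (m - t) i⟩

/-! The q⁻¹-derivative multiplies the coefficient of `y^j` by the q⁻¹-integer `[j]_{q⁻¹}`,
and `[i + j]_{q⁻¹} = [i]_{q⁻¹} + q^{-i} [j]_{q⁻¹}` splits the derivative of each term
`q^{is} aᵢ(m) b_j(m-i)` of a q-product into a part differentiating `a` and a part
differentiating `b`. This is the case `ν = 1`, `(a * b)' = q^s a' * b(m-1) + a * b'`.
Iterating it, the coefficients obey the Pascal rule
`[ν+1, l+1]_q = q^{l+1} [ν, l+1]_q + [ν, l]_q`, and the general case follows by induction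
on `ν`. -/

open Finset

def qInvNum (q : ℚ) (k : ℕ) : ℚ := ((q⁻¹) ^ k - 1) / (q⁻¹ - 1)

@[simp]
lemma qInvNum_zero (q : ℚ) : qInvNum q 0 = 0 := by simp [qInvNum]

lemma qInvNum_add (q : ℚ) (i j : ℕ) :
    qInvNum q (i + j) = qInvNum q i + q⁻¹ ^ i * qInvNum q j := by
  unfold qInvNum
  rw [mul_div_assoc', ← add_div, pow_add]
  ring

lemma coeff_qInvDerivP (q : ℚ) (a : QPoly) (m : ℤ) (j : ℕ) :
    (qInvDerivP q a).coeff m j = qInvNum q (j + 1) * a.coeff m (j + 1) := rfl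

lemma coeff_qMul (q : ℚ) (a b : QPoly) (m : ℤ) (u : ℕ) :
    (qMul q a b).coeff m u =
      ∑ i ∈ range (u + 1), q ^ (i * b.deg) * a.coeff m i * b.coeff (m - i) (u - i) := rfl

lemma inv_pow_mul_pow_mul_succ {q : ℚ} (hq : q ≠ 0) (i d : ℕ) :
    q⁻¹ ^ i * q ^ (i * (d + 1)) = q ^ (i * d) := by
  rw [mul_add, mul_one, pow_add, inv_pow, mul_left_comm, inv_mul_cancel₀ (pow_ne_zero _ hq),
    mul_one]

theorem coeff_qInvDerivP_qMul {q : ℚ} (hq : q ≠ 0) {a b : QPoly}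
    (hb : ∀ (m : ℤ) (j : ℕ), b.deg < j → b.coeff m j = 0) (m : ℤ) (u : ℕ) :
    (qInvDerivP q (qMul q a b)).coeff m u =
      q ^ b.deg * (qMul q (qInvDerivP q a) (mShift b 1)).coeff m u +
        (qMul q a (qInvDerivP q b)).coeff m u := by
  set t : ℕ → ℚ := fun i => q ^ (i * b.deg) * a.coeff m i * b.coeff (m - i) (u + 1 - i)
  have split : ∀ i ∈ range (u + 2),
      qInvNum q (u + 1) * t i = qInvNum q i * t i + q⁻¹ ^ i * qInvNum q (u + 1 - i) * t i := by
    intro i hi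
    rw [← Nat.add_sub_cancel' (Nat.lt_succ_iff.mp (mem_range.mp hi)), qInvNum_add,
      Nat.add_sub_cancel_left]
    ring
  have derivLeft : ∑ i ∈ range (u + 2), qInvNum q i * t i =
      q ^ b.deg * (qMul q (qInvDerivP q a) (mShift b 1)).coeff m u := by
    rw [sum_range_succ', qInvNum_zero, zero_mul, add_zero, coeff_qMul, mul_sum]
    refine sum_congr rfl fun i _ => ?_
    simp only [t, coeff_qInvDerivP, mShift, Nat.add_sub_add_right, Nat.cast_succ,
      sub_add_eq_sub_sub, add_mul, one_mul, pow_add]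
    ring
  have derivRight : ∑ i ∈ range (u + 2), q⁻¹ ^ i * qInvNum q (u + 1 - i) * t i =
      (qMul q a (qInvDerivP q b)).coeff m u := by
    rw [sum_range_succ, Nat.sub_self, qInvNum_zero, mul_zero, zero_mul, add_zero, coeff_qMul]
    refine sum_congr rfl fun i hi => ?_
    have hiu : u + 1 - i = u - i + 1 := by have := mem_range.mp hi; omega
    simp only [t, hiu, coeff_qInvDerivP]
    cases hs : b.deg with
    | zero => simp [hb (m - i) (u - i + 1) (by omega)]
    | succ d =>
      rw [show (qInvDerivP q b).deg = d by simp [qInvDerivP, hs],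
        ← inv_pow_mul_pow_mul_succ hq i d]
      ring
  rw [coeff_qInvDerivP, coeff_qMul, mul_sum, sum_congr rfl split, sum_add_distrib, derivLeft,
    derivRight]

lemma deg_iterate_qInvDerivP (q : ℚ) (a : QPoly) (k : ℕ) :
    ((qInvDerivP q)^[k] a).deg = a.deg - k := by
  induction k with
  | zero => rfl
  | succ k ih =>
    rw [Function.iterate_succ_apply', Nat.sub_succ, ← ih]
    rfl

lemma coeff_iterate_qInvDerivP_eq_zero (q : ℚ) {a : QPoly}
    (ha : ∀ (m : ℤ) (i : ℕ), a.deg < i → a.coeff m i = 0) (k : ℕ) (m : ℤ) {j : ℕ}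
    (hj : a.deg < j + k) : ((qInvDerivP q)^[k] a).coeff m j = 0 := by
  induction k generalizing j with
  | zero => exact ha m j hj
  | succ k ih =>
    rw [Function.iterate_succ_apply', coeff_qInvDerivP, ih (by omega), mul_zero]

lemma coeff_qMul_eq_zero_of_right (q : ℚ) (a : QPoly) {b : QPoly}
    (hb : ∀ (m : ℤ) (j : ℕ), b.coeff m j = 0) (m : ℤ) (u : ℕ) :
    (qMul q a b).coeff m u = 0 := by
  rw [coeff_qMul]
  exact sum_eq_zero fun i _ => by rw [hb, mul_zero]

lemma mShift_mShift (a : QPoly) (s t : ℤ) : mShift (mShift a s) t = mShift a (s + t) := by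
  simp only [mShift, sub_add_eq_sub_sub_swap]

theorem coeff_qInvDerivP_qMul_iterate {q : ℚ} (hq : q ≠ 0) {f g : QPoly}
    (hg : ∀ (m : ℤ) (i : ℕ), g.deg < i → g.coeff m i = 0) (l k : ℕ) (m : ℤ) (u : ℕ) :
    (qInvDerivP q (qMul q ((qInvDerivP q)^[l] f) (mShift ((qInvDerivP q)^[k] g) l))).coeff m u =
      q ^ ((g.deg : ℤ) - k) *
          (qMul q ((qInvDerivP q)^[l + 1] f)
            (mShift ((qInvDerivP q)^[k] g) ((l + 1 : ℕ) : ℤ))).coeff m u +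
        (qMul q ((qInvDerivP q)^[l] f) (mShift ((qInvDerivP q)^[k + 1] g) l)).coeff m u := by
  have hb : ∀ (m : ℤ) (j : ℕ), (mShift ((qInvDerivP q)^[k] g) l).deg < j →
      (mShift ((qInvDerivP q)^[k] g) l).coeff m j = 0 := fun m j hj => by
    rw [mShift, deg_iterate_qInvDerivP] at hj
    exact coeff_iterate_qInvDerivP_eq_zero q hg k _ (by omega)
  rw [coeff_qInvDerivP_qMul hq hb, Function.iterate_succ_apply', Function.iterate_succ_apply',
    mShift_mShift, Nat.cast_succ]
  congr 1
  -- The degree `g.deg - k` truncates at `0`; for `k > g.deg` the term vanishes anyway.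
  rcases le_or_gt k g.deg with hk | hk
  · rw [← Nat.cast_sub hk, zpow_natCast, mShift, deg_iterate_qInvDerivP]
  · rw [coeff_qMul_eq_zero_of_right q _ (b := mShift ((qInvDerivP q)^[k] g) (l + 1))
      fun _ _ => coeff_iterate_qInvDerivP_eq_zero q hg k _ (by omega), mul_zero, mul_zero]

lemma alphaQ_succ (q : ℚ) (a : ℤ) (k : ℕ) :
    alphaQ q a (k + 1) = alphaQ q a k * (q ^ a - q ^ k) := by
  rw [alphaQ, prod_range_succ, zpow_natCast]
  rfl

lemma alphaQ_add_one_succ {q : ℚ} (hq : q ≠ 0) (a : ℤ) (k : ℕ) :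
    alphaQ q (a + 1) (k + 1) = (q ^ (a + 1) - 1) * q ^ k * alphaQ q a k := by
  have shift : ∀ i ∈ range k,
      q ^ (a + 1) - q ^ ((i + 1 : ℕ) : ℤ) = q * (q ^ a - q ^ (i : ℤ)) := fun i _ => by
    rw [Nat.cast_succ, zpow_add_one₀ hq, zpow_add_one₀ hq]
    ring
  rw [alphaQ, prod_range_succ', prod_congr rfl shift, prod_mul_distrib, prod_const, card_range,
    Nat.cast_zero, zpow_zero, alphaQ]
  ring

@[simp]
lemma gaussQ_zero_right (q : ℚ) (n : ℕ) : gaussQ q n 0 = 1 := by simp [gaussQ, alphaQ]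

lemma gaussQ_succ_self (q : ℚ) (n : ℕ) : gaussQ q n (n + 1) = 0 := by
  rw [gaussQ, alphaQ_succ, zpow_natCast, sub_self, mul_zero, zero_div]

lemma gaussQ_succ_succ {q : ℚ} (hq : q ≠ 0) (n k : ℕ) :
    gaussQ q (n + 1) (k + 1) = (q ^ (n + 1) - 1) / (q ^ (k + 1) - 1) * gaussQ q n k := by
  simp only [gaussQ, Nat.cast_succ, alphaQ_add_one_succ hq, ← zpow_natCast, Nat.cast_succ]
  rw [mul_assoc, mul_assoc, mul_div_mul_comm, mul_div_mul_left _ _ (zpow_ne_zero _ hq)]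

lemma gaussQ_succ_right {q : ℚ} (hq : q ≠ 0) (n k : ℕ) :
    gaussQ q n (k + 1) = (q ^ n - q ^ k) / ((q ^ (k + 1) - 1) * q ^ k) * gaussQ q n k := by
  rw [gaussQ, gaussQ, Nat.cast_succ, alphaQ_add_one_succ hq, alphaQ_succ, ← zpow_natCast,
    ← zpow_natCast, ← zpow_natCast, Nat.cast_succ]
  rw [mul_comm (alphaQ q n k), mul_div_mul_comm]

lemma gaussQ_pascal {q : ℚ} (hq : q ≠ 0) {k : ℕ} (hk : q ^ (k + 1) ≠ 1) (n : ℕ) :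
    gaussQ q (n + 1) (k + 1) = q ^ (k + 1) * gaussQ q n (k + 1) + gaussQ q n k := by
  have hk' : q ^ (k + 1) - 1 ≠ 0 := sub_ne_zero.mpr hk
  rw [gaussQ_succ_succ hq, gaussQ_succ_right hq]
  field_simp
  ring

def leibnizCoeff (q : ℚ) (s : ℤ) (ν l : ℕ) : ℚ :=
  gaussQ q ν l * q ^ ((l : ℤ) * (s - ν + l))

@[simp]
lemma leibnizCoeff_zero_right (q : ℚ) (s : ℤ) (ν : ℕ) : leibnizCoeff q s ν 0 = 1 := by
  simp [leibnizCoeff]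

lemma leibnizCoeff_succ_self (q : ℚ) (s : ℤ) (ν : ℕ) : leibnizCoeff q s ν (ν + 1) = 0 := by
  rw [leibnizCoeff, gaussQ_succ_self, zero_mul]

lemma leibnizCoeff_succ_succ {q : ℚ} (hq : 1 < q) (s : ℤ) (ν l : ℕ) :
    leibnizCoeff q s (ν + 1) (l + 1) =
      leibnizCoeff q s ν (l + 1) + q ^ (s - ν + l) * leibnizCoeff q s ν l := by
  have hq0 : q ≠ 0 := by positivity
  have hL : q ^ (((l + 1 : ℕ) : ℤ) * (s - ((ν + 1 : ℕ) : ℤ) + (l + 1 : ℕ))) =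
      q ^ (s - ν + l) * q ^ ((l : ℤ) * (s - ν + l)) := by
    rw [← zpow_add₀ hq0]; push_cast; ring_nf
  have hR : q ^ (((l + 1 : ℕ) : ℤ) * (s - ν + (l + 1 : ℕ))) =
      q ^ (l + 1) * (q ^ (s - ν + l) * q ^ ((l : ℤ) * (s - ν + l))) := by
    rw [← zpow_natCast, ← zpow_add₀ hq0, ← zpow_add₀ hq0]; push_cast; ring_nf
  rw [leibnizCoeff, leibnizCoeff, leibnizCoeff,
    gaussQ_pascal hq0 (one_lt_pow₀ hq l.succ_ne_zero).ne', hL, hR]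
  ring

theorem sum_leibnizCoeff_succ {q : ℚ} (hq : 1 < q) (s : ℤ) (ν : ℕ) (T : ℕ → ℚ) :
    ∑ l ∈ range (ν + 1 + 1), leibnizCoeff q s (ν + 1) l * T l =
      ∑ l ∈ range (ν + 1), leibnizCoeff q s ν l * (q ^ (s - ν + l) * T (l + 1) + T l) := by
  have shifted : ∑ l ∈ range (ν + 1), leibnizCoeff q s ν l * T l =
      ∑ l ∈ range (ν + 1), leibnizCoeff q s ν (l + 1) * T (l + 1) + T 0 := by
    rw [sum_range_succ', sum_range_succ (fun l => leibnizCoeff q s ν (l + 1) * T (l + 1)),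
      leibnizCoeff_succ_self, leibnizCoeff_zero_right]
    ring
  simp only [sum_range_succ' _ (ν + 1), leibnizCoeff_succ_succ hq, leibnizCoeff_zero_right,
    mul_add, sum_add_distrib, shifted]
  simp only [add_mul, sum_add_distrib, mul_left_comm, mul_assoc]
  ring

theorem leibniz_rule_qinv_derivative_general (q : ℕ) (hq : 2 ≤ q) (f g : QPoly)
    (hg : ∀ (m : ℤ) (i : ℕ), g.deg < i → g.coeff m i = 0)
    (ν : ℕ) (m : ℤ) (u : ℕ) :
    ((qInvDerivP (q : ℚ))^[ν] (qMul (q : ℚ) f g)).coeff m u =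
      ∑ l ∈ Finset.range (ν + 1),
        gaussQ (q : ℚ) ν l * (q : ℚ) ^ ((l : ℤ) * ((g.deg : ℤ) - ν + l)) *
          (qMul (q : ℚ) ((qInvDerivP (q : ℚ))^[l] f)
            (mShift ((qInvDerivP (q : ℚ))^[ν - l] g) (l : ℤ))).coeff m u := by
  have hq1 : (1 : ℚ) < q := by exact_mod_cast hq
  induction ν generalizing m u with
  | zero => simp [coeff_qMul, mShift]
  | succ ν ih =>
    rw [Function.iterate_succ_apply', coeff_qInvDerivP, ih, mul_sum]
    refine Eq.trans ?_ (sum_leibnizCoeff_succ hq1 g.deg ν _).symm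
    refine sum_congr rfl fun l hl => ?_
    obtain ⟨k, rfl⟩ : ∃ k, ν = l + k :=
      Nat.exists_eq_add_of_le (Nat.lt_succ_iff.mp (mem_range.mp hl))
    have hk : (g.deg : ℤ) - ((l + k : ℕ) : ℤ) + l = g.deg - k := by push_cast; ring
    rw [leibnizCoeff, mul_left_comm, ← coeff_qInvDerivP, Nat.add_sub_cancel_left,
      coeff_qInvDerivP_qMul_iterate (by positivity) hg, hk,
      show l + k + 1 - (l + 1) = k by omega, show l + k + 1 - l = k + 1 by omega]

/-- **Leibniz rule for the q⁻¹-derivative**: for homogeneous polynomials `f(x,y;m)` of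
degree `r` and `g(x,y;m)` of degree `s`,
`[f(x,y;m) * g(x,y;m)]^{ν} = ∑_{l=0}^ν [ν l]_q q^(l(s-ν+l)) f^{l}(x,y;m) * g^{ν-l}(x,y;m-l)`
(stated coefficientwise). -/
theorem leibniz_rule_qinv_derivative (q : ℕ) (hq : 2 ≤ q) (f g : QPoly)
    (hf : ∀ (m : ℤ) (i : ℕ), f.deg < i → f.coeff m i = 0)
    (hg : ∀ (m : ℤ) (i : ℕ), g.deg < i → g.coeff m i = 0)
    (ν : ℕ) (m : ℤ) (u : ℕ) :
    ((qInvDerivP (q : ℚ))^[ν] (qMul (q : ℚ) f g)).coeff m u =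
      ∑ l ∈ Finset.range (ν + 1),
        gaussQ (q : ℚ) ν l * (q : ℚ) ^ ((l : ℤ) * ((g.deg : ℤ) - ν + l)) *
          (qMul (q : ℚ) ((qInvDerivP (q : ℚ))^[l] f)
            (mShift ((qInvDerivP (q : ℚ))^[ν - l] g) (l : ℤ))).coeff m u :=
  leibniz_rule_qinv_derivative_general q hq f g hg ν m u
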